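/- arXiv:2603.12548 — 4 statements merged into one kernel-verified Lean document; each statement's English description precedes it below -/
import Mathlib

section
/- Fix R > 0 and assume A'(R) V(R) < A(R)². Then A(ς)² − n² H(R)² V(ς)² > 0 for every ς ∈ (0,R), and the function ς ↦ (−n H(R) V(ς)) / (ϱ(ς) √(A(ς)² − n² H(R)² V(ς)²)) is nonnegative and Lebesgue integrable on the open interval (0,R); i.e. the improper integral defining the radial constant-mean-curvature profile v_R converges. -/
open MeasureTheory Set

set_option maxHeartbeats 1000000 in
/-- In the rotationally symmetric model with weighted area
`A(r) = ϱ(r) ξ(r)^(n-1)`, weighted volume `V(r) = ∫₀^r A`, and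
`H(r) = -(1/n) A(r)/V(r)`, assuming `A/V` is strictly decreasing on `(0,∞)`,
fix `R > 0` with `A'(R) V(R) < A(R)²`.  Then
`A(ς)² − n² H(R)² V(ς)² > 0` on `(0,R)`, the integrand of the radial
CMC profile is nonnegative there, and it is Lebesgue integrable on `(0,R)`. -/
theorem stmt_0
    (n : ℕ) (hn : 2 ≤ n)
    (ϱ ξ A V H : ℝ → ℝ)
    (hϱ : ContDiffOn ℝ (⊤ : ℕ∞) ϱ (Ici 0)) (hξ : ContDiffOn ℝ (⊤ : ℕ∞) ξ (Ici 0))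
    (hϱpos : ∀ r, 0 ≤ r → 0 < ϱ r)
    (hξ0 : ξ 0 = 0) (hξ'0 : deriv ξ 0 = 1)
    (hξpos : ∀ r, 0 < r → 0 < ξ r)
    (hA : ∀ r, A r = ϱ r * ξ r ^ (n - 1))
    (hV : ∀ r, V r = ∫ ς in Ioc (0:ℝ) r, A ς)
    (hH : ∀ r, 0 < r → H r = -(1 / (n:ℝ)) * (A r / V r))
    (hmono : StrictAntiOn (fun r => A r / V r) (Ioi 0))
    (R : ℝ) (hR : 0 < R)
    (hAV : deriv A R * V R < A R ^ 2) :
    (∀ ς ∈ Ioo 0 R, 0 < A ς ^ 2 - (n:ℝ) ^ 2 * H R ^ 2 * V ς ^ 2) ∧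
    (∀ ς ∈ Ioo 0 R,
      0 ≤ (-(n:ℝ) * H R * V ς) /
        (ϱ ς * Real.sqrt (A ς ^ 2 - (n:ℝ) ^ 2 * H R ^ 2 * V ς ^ 2))) ∧
    IntegrableOn
      (fun ς => (-(n:ℝ) * H R * V ς) /
        (ϱ ς * Real.sqrt (A ς ^ 2 - (n:ℝ) ^ 2 * H R ^ 2 * V ς ^ 2)))
      (Ioo 0 R) := by
  have hn0 : (n:ℝ) ≠ 0 := by positivity
  have hAeq : A = fun r => ϱ r * ξ r ^ (n - 1) := funext hA
  -- continuity and positivity of A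
  have hAcont : ContinuousOn A (Ici 0) := by
    rw [hAeq]; exact (hϱ.continuousOn).mul ((hξ.continuousOn).pow _)
  have hApos : ∀ ς : ℝ, 0 < ς → 0 < A ς := fun ς hς => by
    rw [hA]; exact mul_pos (hϱpos ς hς.le) (pow_pos (hξpos ς hς) _)
  have hAnn : ∀ ς : ℝ, 0 ≤ ς → 0 ≤ A ς := by
    intro ς hς
    rcases hς.eq_or_lt with h | h
    · rw [hA, ← h, hξ0, zero_pow (by omega), mul_zero]
    · exact (hApos ς h).le
  -- integrability of A
  have hIntA : ∀ r : ℝ, IntegrableOn A (Ioc 0 r) := by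
    intro r
    have h1 : Icc (0:ℝ) r ⊆ Ici 0 := fun x hx => hx.1
    exact ((hAcont.mono h1).integrableOn_Icc).mono_set Ioc_subset_Icc_self
  have hIntI : ∀ r : ℝ, 0 ≤ r → IntervalIntegrable A volume 0 r := fun r hr =>
    (intervalIntegrable_iff_integrableOn_Ioc_of_le hr).2 (hIntA r)
  have hVeq : ∀ r : ℝ, 0 ≤ r → V r = ∫ x in (0:ℝ)..r, A x := fun r hr => by
    rw [hV, intervalIntegral.integral_of_le hr]
  -- positivity and monotonicity of V
  have hVpos : ∀ r : ℝ, 0 < r → 0 < V r := by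
    intro r hr
    rw [hVeq r hr.le]
    exact intervalIntegral.intervalIntegral_pos_of_pos_on (hIntI r hr.le)
      (fun x hx => hApos x hx.1) hr
  have hVmono : ∀ s t : ℝ, s ≤ t → V s ≤ V t := by
    intro s t hst
    rw [hV, hV]
    exact setIntegral_mono_set (hIntA t)
      ((ae_restrict_iff' measurableSet_Ioc).2 (ae_of_all _ fun x hx => hAnn x hx.1.le))
      (HasSubset.Subset.eventuallyLE (Ioc_subset_Ioc_right hst))
  set c : ℝ := A R / V R with hc_def
  have hVR : 0 < V R := hVpos R hR
  have hcpos : 0 < c := div_pos (hApos R hR) hVR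
  -- relation between H R and c
  have h1 : -((n:ℝ) * H R) = c := by
    rw [hH R hR, hc_def]; field_simp
  have hc2 : (n:ℝ) ^ 2 * H R ^ 2 = c ^ 2 := by
    calc (n:ℝ) ^ 2 * H R ^ 2 = (-((n:ℝ) * H R)) ^ 2 := by ring
    _ = c ^ 2 := by rw [h1]
  have hcVR : c * V R = A R := by rw [hc_def]; field_simp
  -- the key strict inequality on (0,R)
  have hgt : ∀ ς ∈ Ioo (0:ℝ) R, c * V ς < A ς := by
    intro ς hς
    have h := hmono (mem_Ioi.2 hς.1) (mem_Ioi.2 hR) hς.2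
    simp only at h
    rw [hc_def]
    exact (lt_div_iff₀ (hVpos ς hς.1)).1 h
  have hP : ∀ ς ∈ Ioo (0:ℝ) R, 0 < A ς ^ 2 - c ^ 2 * V ς ^ 2 := by
    intro ς hς
    have h2 := hgt ς hς
    have h3 := hVpos ς hς.1
    nlinarith [mul_pos hcpos h3]
  -- Part 1
  have part1 : ∀ ς ∈ Ioo (0:ℝ) R, 0 < A ς ^ 2 - (n:ℝ) ^ 2 * H R ^ 2 * V ς ^ 2 := by
    intro ς hς; rw [hc2]; exact hP ς hς
  -- rewrite the integrand
  have hfeq : (fun ς => (-(n:ℝ) * H R * V ς) /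
        (ϱ ς * Real.sqrt (A ς ^ 2 - (n:ℝ) ^ 2 * H R ^ 2 * V ς ^ 2)))
      = fun ς => c * V ς / (ϱ ς * Real.sqrt (A ς ^ 2 - c ^ 2 * V ς ^ 2)) := by
    funext ς
    rw [hc2, show -(n:ℝ) * H R * V ς = -((n:ℝ) * H R) * V ς by ring, h1]
  set g : ℝ → ℝ := fun ς => c * V ς / (ϱ ς * Real.sqrt (A ς ^ 2 - c ^ 2 * V ς ^ 2))
    with hg_def
  -- nonnegativity
  have hgnn : ∀ ς ∈ Ioo (0:ℝ) R, 0 ≤ g ς := by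
    intro ς hς
    exact div_nonneg (mul_nonneg hcpos.le (hVpos ς hς.1).le)
      (mul_nonneg (hϱpos ς hς.1.le).le (Real.sqrt_nonneg _))
  have part2 : ∀ ς ∈ Ioo (0:ℝ) R,
      0 ≤ (-(n:ℝ) * H R * V ς) /
        (ϱ ς * Real.sqrt (A ς ^ 2 - (n:ℝ) ^ 2 * H R ^ 2 * V ς ^ 2)) := by
    intro ς hς
    rw [hc2, show -(n:ℝ) * H R * V ς = -((n:ℝ) * H R) * V ς by ring, h1]
    exact hgnn ς hς
  refine ⟨part1, part2, ?_⟩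
  rw [hfeq]
  -- V is differentiable on (0,∞) with derivative A
  have hVderiv : ∀ r : ℝ, 0 < r → HasDerivAt V (A r) r := by
    intro r hr
    have hF : HasDerivAt (fun u => ∫ x in (0:ℝ)..u, A x) (A r) r :=
      intervalIntegral.integral_hasDerivAt_right (hIntI r hr.le)
        ⟨Ici 0, Ici_mem_nhds hr, hAcont.aestronglyMeasurable measurableSet_Ici⟩
        (hAcont.continuousAt (Ici_mem_nhds hr))
    apply hF.congr_of_eventuallyEq
    filter_upwards [eventually_gt_nhds hr] with u hu
    exact hVeq u hu.le
  have hVcont : ContinuousOn V (Ioi 0) := fun r hr =>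
    ((hVderiv r hr).continuousAt).continuousWithinAt
  -- continuity of g on Ioo 0 R
  have hgcont : ContinuousOn g (Ioo 0 R) := by
    have hIoo : Ioo (0:ℝ) R ⊆ Ioi 0 := Ioo_subset_Ioi_self
    have hIoo' : Ioo (0:ℝ) R ⊆ Ici 0 := fun x hx => hx.1.le
    apply ContinuousOn.div
    · exact continuousOn_const.mul (hVcont.mono hIoo)
    · exact (hϱ.continuousOn.mono hIoo').mul
        (Real.continuous_sqrt.comp_continuousOn
          (((hAcont.mono hIoo').pow 2).sub
            (continuousOn_const.mul ((hVcont.mono hIoo).pow 2))))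
    · intro ς hς
      have hsq : 0 < Real.sqrt (A ς ^ 2 - c ^ 2 * V ς ^ 2) := Real.sqrt_pos.2 (hP ς hς)
      exact (mul_pos (hϱpos ς hς.1.le) hsq).ne'
  -- lower bound for ϱ on [0,R]
  obtain ⟨x₀, hx₀, hx₀min⟩ := (isCompact_Icc (a := (0:ℝ)) (b := R)).exists_isMinOn
    (nonempty_Icc.2 hR.le) (hϱ.continuousOn.mono (fun x hx => hx.1))
  set mϱ : ℝ := ϱ x₀ with hmϱ_def
  have hmϱ : 0 < mϱ := hϱpos x₀ hx₀.1
  have hmϱ_le : ∀ x ∈ Icc (0:ℝ) R, mϱ ≤ ϱ x := fun x hx => hx₀min hx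
  -- derivative argument near R
  have hADiff : DifferentiableAt ℝ A R := by
    rw [hAeq]
    exact (((hϱ.contDiffAt (Ici_mem_nhds hR)).differentiableAt (by simp))).mul
      (((hξ.contDiffAt (Ici_mem_nhds hR)).differentiableAt (by simp)).pow _)
  have hgd : HasDerivAt (fun ς => A ς - c * V ς) (deriv A R - c * A R) R :=
    (hADiff.hasDerivAt).sub ((hVderiv R hR).const_mul c)
  have hderiv_neg : deriv A R < c * A R := by
    have h2 : deriv A R < A R ^ 2 / V R := (lt_div_iff₀ hVR).2 hAV
    have h3 : A R ^ 2 / V R = c * A R := by rw [hc_def]; field_simp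
    linarith [h3 ▸ h2]
  set k : ℝ := (c * A R - deriv A R) / 2 with hk_def
  have hk : 0 < k := by rw [hk_def]; linarith
  have hev : ∀ᶠ ς in nhdsWithin R {R}ᶜ,
      slope (fun ς => A ς - c * V ς) R ς < -k := by
    apply (hasDerivAt_iff_tendsto_slope.1 hgd).eventually_lt_const
    rw [hk_def]; linarith
  have hev' : ∀ᶠ ς in nhdsWithin R (Iio R),
      slope (fun ς => A ς - c * V ς) R ς < -k :=
    hev.filter_mono (nhdsWithin_mono R (fun x hx => ne_of_lt hx))
  obtain ⟨b₀, hb₀, hb₀sub⟩ := mem_nhdsLT_iff_exists_Ioo_subset.1 hev'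
  set b : ℝ := max b₀ (R/2) with hb_def
  have hbR : b < R := max_lt hb₀ (by linarith)
  have hbpos : 0 < b := lt_of_lt_of_le (by linarith : (0:ℝ) < R/2) (le_max_right _ _)
  have hglin : ∀ ς ∈ Ioo b R, k * (R - ς) ≤ A ς - c * V ς := by
    intro ς hς
    have hmem : ς ∈ Ioo b₀ R := ⟨lt_of_le_of_lt (le_max_left _ _) hς.1, hς.2⟩
    have hs := hb₀sub hmem
    rw [mem_setOf_eq, slope_def_field] at hs
    have hgR0 : A R - c * V R = 0 := by rw [hcVR]; ring
    rw [hgR0, sub_zero] at hs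
    have hςR : ς - R < 0 := by linarith [hς.2]
    have h4 := (div_lt_iff_of_neg hςR).1 hs
    nlinarith
  -- piece 1 : (0, R/2]
  have hhalfmem : R/2 ∈ Ioo (0:ℝ) R := ⟨by linarith, by linarith⟩
  set θ : ℝ := c * V (R/2) / A (R/2) with hθ_def
  have hAhalf : 0 < A (R/2) := hApos _ hhalfmem.1
  have hθpos : 0 < θ := div_pos (mul_pos hcpos (hVpos _ hhalfmem.1)) hAhalf
  have hθlt : θ < 1 := (div_lt_one hAhalf).2 (hgt _ hhalfmem)
  have hθbd : ∀ ς : ℝ, 0 < ς → ς ≤ R/2 → c * V ς ≤ θ * A ς := by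
    intro ς h0 hhalf
    have hθA : θ * A (R/2) = c * V (R/2) := div_mul_cancel₀ _ hAhalf.ne'
    rcases hhalf.eq_or_lt with heq | hlt
    · rw [heq]; linarith [hθA]
    · have hmm := hmono (mem_Ioi.2 h0) (mem_Ioi.2 hhalfmem.1) hlt
      simp only at hmm
      have hcross := (div_lt_div_iff₀ (hVpos _ hhalfmem.1) (hVpos ς h0)).1 hmm
      have hθA2 : θ * A (R/2) * A ς = c * V (R/2) * A ς := by rw [hθA]
      nlinarith [mul_le_mul_of_nonneg_left hcross.le hcpos.le, hθA2, hAhalf,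
        hApos ς h0, mul_pos hcpos (hVpos ς h0)]
  set t : ℝ := Real.sqrt (1 - θ ^ 2) with ht_def
  have ht : 0 < t := Real.sqrt_pos.2 (by nlinarith [hθpos, hθlt])
  have ht2 : t ^ 2 = 1 - θ ^ 2 := Real.sq_sqrt (by nlinarith [hθpos, hθlt])
  set M₁ : ℝ := θ / (mϱ * t) with hM₁_def
  have bound1 : ∀ ς ∈ Ioc (0:ℝ) (R/2), g ς ≤ M₁ := by
    intro ς hς
    have h0 := hς.1
    have hςmem : ς ∈ Ioo (0:ℝ) R := ⟨h0, lt_of_le_of_lt hς.2 (by linarith)⟩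
    have hθA := hθbd ς h0 hς.2
    have hAp := hApos ς h0
    have hVp := hVpos ς h0
    have hcV : 0 ≤ c * V ς := (mul_pos hcpos hVp).le
    have hs2 : (t * A ς) ^ 2 ≤ A ς ^ 2 - c ^ 2 * V ς ^ 2 := by nlinarith
    have hs : t * A ς ≤ Real.sqrt (A ς ^ 2 - c ^ 2 * V ς ^ 2) := by
      have := Real.sqrt_le_sqrt hs2
      rwa [Real.sqrt_sq (mul_nonneg ht.le hAp.le)] at this
    have hden_pos : 0 < ϱ ς * Real.sqrt (A ς ^ 2 - c ^ 2 * V ς ^ 2) :=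
      mul_pos (hϱpos ς h0.le) (Real.sqrt_pos.2 (hP ς hςmem))
    rw [hg_def, div_le_iff₀ hden_pos]
    have hϱς : mϱ ≤ ϱ ς := hmϱ_le ς ⟨h0.le, by linarith [hς.2]⟩
    have hchain : mϱ * (t * A ς) ≤ ϱ ς * Real.sqrt (A ς ^ 2 - c ^ 2 * V ς ^ 2) :=
      mul_le_mul hϱς hs (mul_nonneg ht.le hAp.le) (hϱpos ς h0.le).le
    have hMeq : M₁ * (mϱ * (t * A ς)) = θ * A ς := by
      rw [hM₁_def]; field_simp
    calc c * V ς ≤ θ * A ς := hθA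
      _ = M₁ * (mϱ * (t * A ς)) := hMeq.symm
      _ ≤ M₁ * (ϱ ς * Real.sqrt (A ς ^ 2 - c ^ 2 * V ς ^ 2)) :=
          mul_le_mul_of_nonneg_left hchain
            (le_of_lt (div_pos hθpos (mul_pos hmϱ ht)))
  have hsub1 : Ioc (0:ℝ) (R/2) ⊆ Ioo 0 R :=
    fun x hx => ⟨hx.1, lt_of_le_of_lt hx.2 (by linarith)⟩
  have I1 : IntegrableOn g (Ioc (0:ℝ) (R/2)) := by
    apply Integrable.mono' (g := fun _ => M₁)
      (integrableOn_const measure_Ioc_lt_top.ne)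
      ((hgcont.mono hsub1).aestronglyMeasurable measurableSet_Ioc)
    refine (ae_restrict_iff' measurableSet_Ioc).2 (ae_of_all _ fun x hx => ?_)
    rw [Real.norm_eq_abs, abs_of_nonneg (hgnn x (hsub1 hx))]
    exact bound1 x hx
  -- piece 2 : [R/2, b]
  have hsub2 : Icc (R/2) b ⊆ Ioo 0 R :=
    fun x hx => ⟨lt_of_lt_of_le (by linarith) hx.1, lt_of_le_of_lt hx.2 hbR⟩
  have I2 : IntegrableOn g (Icc (R/2) b) := (hgcont.mono hsub2).integrableOn_Icc
  -- piece 3 : (b, R)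
  have hIccb : Icc b R ⊆ Ici (0:ℝ) := fun x hx => (hbpos.le.trans hx.1)
  obtain ⟨y₀, hy₀, hy₀min⟩ := (isCompact_Icc (a := b) (b := R)).exists_isMinOn
    (nonempty_Icc.2 hbR.le) (hAcont.mono hIccb)
  set mA : ℝ := A y₀ with hmA_def
  have hmA : 0 < mA := hApos y₀ (hbpos.trans_le hy₀.1)
  set C' : ℝ := c * V R / (mϱ * Real.sqrt (k * mA)) with hC'_def
  have hskmA : 0 < Real.sqrt (k * mA) := Real.sqrt_pos.2 (mul_pos hk hmA)
  have hsub3 : Ioo b R ⊆ Ioo 0 R := fun x hx => ⟨hbpos.trans hx.1, hx.2⟩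
  have hint : IntegrableOn (fun x => C' * (R - x) ^ (-(1/2) : ℝ)) (Ioo b R) := by
    have hrpow : IntervalIntegrable (fun x : ℝ => x ^ (-(1/2) : ℝ)) volume 0 (R - b) :=
      intervalIntegral.intervalIntegrable_rpow' (by norm_num)
    have h5 := hrpow.comp_sub_left R
    simp only [sub_zero, sub_sub_cancel] at h5
    have h6 : IntegrableOn (fun x => (R - x) ^ (-(1/2) : ℝ)) (Ioc b R) :=
      (intervalIntegrable_iff_integrableOn_Ioc_of_le hbR.le).1 h5.symm
    exact (h6.mono_set Ioo_subset_Ioc_self).const_mul C'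
  have bound3 : ∀ ς ∈ Ioo b R, g ς ≤ C' * (R - ς) ^ (-(1/2) : ℝ) := by
    intro ς hς
    have hςmem : ς ∈ Ioo (0:ℝ) R := hsub3 hς
    have hRς : 0 < R - ς := by linarith [hς.2]
    have hlin := hglin ς hς
    have hAmA : mA ≤ A ς := hy₀min ⟨hς.1.le, hς.2.le⟩
    have hVp := hVpos ς hςmem.1
    have hcVnn : 0 ≤ c * V ς := (mul_pos hcpos hVp).le
    have hsum : mA ≤ A ς + c * V ς := by linarith
    have hgtς := hgt ς hςmem
    have hprod : k * (R - ς) * mA ≤ A ς ^ 2 - c ^ 2 * V ς ^ 2 := by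
      have h7 := mul_le_mul hlin hsum hmA.le (by linarith)
      nlinarith
    have hsqrt : Real.sqrt (k * (R - ς) * mA) ≤
        Real.sqrt (A ς ^ 2 - c ^ 2 * V ς ^ 2) := Real.sqrt_le_sqrt hprod
    have hfact : Real.sqrt (k * (R - ς) * mA)
        = Real.sqrt (k * mA) * Real.sqrt (R - ς) := by
      rw [show k * (R - ς) * mA = (k * mA) * (R - ς) by ring,
        Real.sqrt_mul (mul_pos hk hmA).le]
    have hsRς : 0 < Real.sqrt (R - ς) := Real.sqrt_pos.2 hRς
    have hϱς : mϱ ≤ ϱ ς := hmϱ_le ς ⟨hςmem.1.le, hς.2.le⟩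
    have hden : mϱ * (Real.sqrt (k * mA) * Real.sqrt (R - ς)) ≤
        ϱ ς * Real.sqrt (A ς ^ 2 - c ^ 2 * V ς ^ 2) :=
      mul_le_mul hϱς (hfact ▸ hsqrt)
        (mul_nonneg (Real.sqrt_nonneg _) (Real.sqrt_nonneg _)) (hϱpos ς hςmem.1.le).le
    have hnum : c * V ς ≤ c * V R :=
      mul_le_mul_of_nonneg_left (hVmono ς R hς.2.le) hcpos.le
    have step1 : g ς ≤ c * V R / (mϱ * (Real.sqrt (k * mA) * Real.sqrt (R - ς))) := by
      rw [hg_def]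
      exact div_le_div₀ (mul_nonneg hcpos.le hVR.le) hnum
        (mul_pos hmϱ (mul_pos hskmA hsRς)) hden
    have step2 : c * V R / (mϱ * (Real.sqrt (k * mA) * Real.sqrt (R - ς)))
        = C' * (R - ς) ^ (-(1/2) : ℝ) := by
      rw [Real.rpow_neg hRς.le, ← Real.sqrt_eq_rpow, hC'_def]
      field_simp
    linarith [step2 ▸ step1]
  have I3 : IntegrableOn g (Ioo b R) := by
    apply Integrable.mono' hint
      ((hgcont.mono hsub3).aestronglyMeasurable measurableSet_Ioo)
    refine (ae_restrict_iff' measurableSet_Ioo).2 (ae_of_all _ fun x hx => ?_)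
    rw [Real.norm_eq_abs, abs_of_nonneg (hgnn x (hsub3 hx))]
    exact bound3 x hx
  have hcover : Ioo (0:ℝ) R ⊆ Ioc 0 (R/2) ∪ (Icc (R/2) b ∪ Ioo b R) := by
    intro x hx
    by_cases hx1 : x ≤ R/2
    · exact Or.inl ⟨hx.1, hx1⟩
    by_cases hx2 : x ≤ b
    · exact Or.inr (Or.inl ⟨le_of_not_ge hx1, hx2⟩)
    · exact Or.inr (Or.inr ⟨lt_of_not_ge hx2, hx.2⟩)
  exact ((I1.union (I2.union I3)).mono_set hcover)
end

section
/- Fix R > 0 with A'(R) V(R) < A(R)², and define v_R(r) = ∫_R^r n H(R) V(ς) / (ϱ(ς) √(A(ς)² − n² H(R)² V(ς)²)) dς for r ∈ [0,R]. Then: (i) v_R(R) = 0; (ii) v_R is nonnegative and non-increasing on [0,R]; (iii) v_R is differentiable on (0,R) with v_R'(r) = n H(R) V(r) / (ϱ(r) √(A(r)² − n² H(R)² V(r)²)); and (iv) v_R satisfies the radial constant-mean-curvature equation d/dr [ v_R'(r) / √(ϱ(r)^{−2} + v_R'(r)²) ] + (v_R'(r) / √(ϱ(r)^{−2} + v_R'(r)²))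 · (ϱ'(r)/ϱ(r) + (n−1) ξ'(r)/ξ(r)) = n H(R) for all r ∈ (0,R). (Geometrically: the Killing graph of v_R over the geodesic ball of radius R in the model has constant mean curvature H(R) and its boundary is the geodesic sphere of radius R.) -/
open MeasureTheory Set Topology Filter

set_option maxHeartbeats 1000000 in
/-- With `A(r) = ϱ(r) ξ(r)^(n-1)`, `V(r) = ∫₀^r A`,
`H(r) = -(1/n) A(r)/V(r)`, `A/V` strictly decreasing on `(0,∞)`, fix `R > 0`
with `A'(R) V(R) < A(R)²` and set
`v_R(r) = ∫_R^r n H(R) V(ς)/(ϱ(ς)√(A(ς)² − n²H(R)²V(ς)²)) dς`.  Then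
(i) `v_R(R) = 0`; (ii) `v_R` is nonnegative and non-increasing on `[0,R]`;
(iii) `v_R' (r) = n H(R) V(r)/(ϱ(r)√(A(r)² − n²H(R)²V(r)²))` on `(0,R)`;
(iv) `v_R` satisfies the radial constant-mean-curvature equation
`(v_R'/√(ϱ⁻²+v_R'²))' + (v_R'/√(ϱ⁻²+v_R'²))(ϱ'/ϱ + (n−1)ξ'/ξ) = n H(R)`. -/
theorem stmt_3
    (n : ℕ) (hn : 2 ≤ n)
    (ϱ ξ A V H : ℝ → ℝ)
    (hϱ : ContDiffOn ℝ (⊤ : ℕ∞) ϱ (Ici 0)) (hξ : ContDiffOn ℝ (⊤ : ℕ∞) ξ (Ici 0))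
    (hϱpos : ∀ r, 0 ≤ r → 0 < ϱ r)
    (hξ0 : ξ 0 = 0) (hξ'0 : deriv ξ 0 = 1)
    (hξpos : ∀ r, 0 < r → 0 < ξ r)
    (hA : ∀ r, A r = ϱ r * ξ r ^ (n - 1))
    (hV : ∀ r, V r = ∫ ς in Ioc (0:ℝ) r, A ς)
    (hH : ∀ r, 0 < r → H r = -(1 / (n:ℝ)) * (A r / V r))
    (hmono : StrictAntiOn (fun r => A r / V r) (Ioi 0))
    (R : ℝ) (hR : 0 < R)
    (hAV : deriv A R * V R < A R ^ 2) :
    let g : ℝ → ℝ := fun ς =>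
      (n:ℝ) * H R * V ς /
        (ϱ ς * Real.sqrt (A ς ^ 2 - (n:ℝ) ^ 2 * H R ^ 2 * V ς ^ 2))
    let vR : ℝ → ℝ := fun r => ∫ ς in R..r, g ς
    -- (i)
    vR R = 0 ∧
    -- (ii)
    (∀ r ∈ Icc (0:ℝ) R, 0 ≤ vR r) ∧ AntitoneOn vR (Icc 0 R) ∧
    -- (iii)
    (∀ r ∈ Ioo (0:ℝ) R, HasDerivAt vR (g r) r) ∧
    -- (iv)
    (∀ r ∈ Ioo (0:ℝ) R,
      HasDerivAt (fun ρ => g ρ / Real.sqrt ((ϱ ρ)⁻¹ ^ 2 + g ρ ^ 2))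
        ((n:ℝ) * H R -
          (g r / Real.sqrt ((ϱ r)⁻¹ ^ 2 + g r ^ 2)) *
            (deriv ϱ r / ϱ r + ((n:ℝ) - 1) * deriv ξ r / ξ r)) r) := by
  intro g vR
  have hn0 : (n:ℝ) ≠ 0 := by positivity
  have hAfun : A = fun r => ϱ r * ξ r ^ (n - 1) := funext hA
  have hcontA : ContinuousOn A (Ici 0) := by
    rw [hAfun]; exact hϱ.continuousOn.mul (hξ.continuousOn.pow _)
  have hApos : ∀ r, 0 < r → 0 < A r := fun r hr => by
    rw [hA]; exact mul_pos (hϱpos r hr.le) (pow_pos (hξpos r hr) _)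
  have hAnonneg : ∀ r, 0 ≤ r → 0 ≤ A r := by
    intro r hr
    rcases hr.eq_or_lt with h | h
    · rw [hA, ← h, hξ0, zero_pow (by omega), mul_zero]
    · exact (hApos r h).le
  have hIci : ∀ a b : ℝ, 0 ≤ a → 0 ≤ b → uIcc a b ⊆ Ici 0 := by
    intro a b ha hb x hx
    rcases mem_uIcc.mp hx with h | h
    · exact le_trans ha h.1
    · exact le_trans hb h.1
  have hAint : ∀ a b : ℝ, 0 ≤ a → 0 ≤ b → IntervalIntegrable A volume a b :=
    fun a b ha hb => (hcontA.mono (hIci a b ha hb)).intervalIntegrable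
  have hVeq : ∀ r, 0 ≤ r → V r = ∫ ς in (0:ℝ)..r, A ς := fun r hr => by
    rw [hV, intervalIntegral.integral_of_le hr]
  have hV0 : V 0 = 0 := by rw [hV]; simp
  have hVpos : ∀ r, 0 < r → 0 < V r := fun r hr => by
    rw [hVeq r hr.le]
    exact intervalIntegral.intervalIntegral_pos_of_pos_on (hAint 0 r le_rfl hr.le)
      (fun x hx => hApos x hx.1) hr
  have hVle : ∀ x, 0 ≤ x → x ≤ R → V x ≤ V R := by
    intro x hx hxR
    have h1 := intervalIntegral.integral_add_adjacent_intervals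
      (hAint 0 x le_rfl hx) (hAint x R hx hR.le)
    have h2 : 0 ≤ ∫ ς in x..R, A ς :=
      intervalIntegral.integral_nonneg hxR (fun u hu => hAnonneg u (hx.trans hu.1))
    rw [hVeq x hx, hVeq R hR.le]; linarith
  have hVderiv : ∀ r, 0 < r → HasDerivAt V (A r) r := by
    intro r hr
    have hAc : ContinuousAt A r := (hcontA r hr.le).continuousAt (Ici_mem_nhds hr)
    have h1 : HasDerivAt (fun u => ∫ ς in (0:ℝ)..u, A ς) (A r) r :=
      intervalIntegral.integral_hasDerivAt_right (hAint 0 r le_rfl hr.le)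
        ⟨Ici 0, Ici_mem_nhds hr, (hcontA.aestronglyMeasurable measurableSet_Ici)⟩ hAc
    exact h1.congr_of_eventuallyEq
      (Filter.eventually_of_mem (Ioi_mem_nhds hr) (fun u hu => hVeq u (le_of_lt hu)))
  set c : ℝ := A R / V R with hc_def
  have hVR : 0 < V R := hVpos R hR
  have hAR : 0 < A R := hApos R hR
  have hc : 0 < c := div_pos hAR hVR
  have hcV : c * V R = A R := div_mul_cancel₀ _ hVR.ne'
  have hnH : (n:ℝ) * H R = -c := by
    rw [hH R hR, ← hc_def, one_div, ← mul_assoc, mul_neg, mul_inv_cancel₀ hn0]; ring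
  have hH2 : (n:ℝ) ^ 2 * H R ^ 2 = c ^ 2 := by
    have h : ((n:ℝ) * H R) ^ 2 = (-c) ^ 2 := by rw [hnH]
    linear_combination h
  have hg : ∀ ς, g ς = -c * V ς / (ϱ ς * Real.sqrt (A ς ^ 2 - c ^ 2 * V ς ^ 2)) := by
    intro ς
    show (n:ℝ) * H R * V ς / (ϱ ς * Real.sqrt (A ς ^ 2 - (n:ℝ) ^ 2 * H R ^ 2 * V ς ^ 2)) = _
    rw [hnH, hH2]
  have hgfun : g = fun ς => -c * V ς / (ϱ ς * Real.sqrt (A ς ^ 2 - c ^ 2 * V ς ^ 2)) :=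
    funext hg
  have hW : ∀ ς, 0 < ς → ς < R → 0 < A ς ^ 2 - c ^ 2 * V ς ^ 2 := by
    intro ς h1 h2
    have hAVc : c < A ς / V ς := hmono (mem_Ioi.2 h1) (mem_Ioi.2 hR) h2
    have hVς := hVpos ς h1
    have h3 : c * V ς < A ς := (lt_div_iff₀ hVς).mp hAVc
    have h4 : A ς ^ 2 - c ^ 2 * V ς ^ 2 = (A ς - c * V ς) * (A ς + c * V ς) := by ring
    rw [h4]
    exact mul_pos (by linarith) (by nlinarith [mul_pos hc hVς])
  have hWR0 : A R ^ 2 - c ^ 2 * V R ^ 2 = 0 := by linear_combination (-(c * V R + A R)) * hcV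
  have hgneg : ∀ ς, 0 < ς → ς < R → g ς < 0 := by
    intro ς h1 h2
    rw [hg]
    apply div_neg_of_neg_of_pos
    · have := mul_pos hc (hVpos ς h1); linarith
    · exact mul_pos (hϱpos ς h1.le) (Real.sqrt_pos.mpr (hW ς h1 h2))
  have hg0 : g 0 = 0 := by rw [hg, hV0]; simp
  have hgR : g R = 0 := by rw [hg, hWR0]; simp
  have hgnonpos : ∀ ς ∈ Icc (0:ℝ) R, g ς ≤ 0 := by
    intro ς hς
    rcases hς.1.eq_or_lt with h | h
    · rw [← h, hg0]
    rcases hς.2.eq_or_lt with h2 | h2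
    · rw [h2, hgR]
    · exact (hgneg ς h h2).le
  have hgcontAt : ∀ r, 0 < r → r < R → ContinuousAt g r := by
    intro r h1 h2
    rw [hgfun]
    have hVc : ContinuousAt V r := (hVderiv r h1).continuousAt
    have hϱc : ContinuousAt ϱ r := (hϱ.continuousOn r h1.le).continuousAt (Ici_mem_nhds h1)
    have hAc : ContinuousAt A r := (hcontA r h1.le).continuousAt (Ici_mem_nhds h1)
    have hden : ϱ r * Real.sqrt (A r ^ 2 - c ^ 2 * V r ^ 2) ≠ 0 :=
      (mul_pos (hϱpos r h1.le) (Real.sqrt_pos.mpr (hW r h1 h2))).ne'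
    exact (continuousAt_const.mul hVc).div
      (hϱc.mul (Real.continuous_sqrt.continuousAt.comp
        ((hAc.pow 2).sub (continuousAt_const.mul (hVc.pow 2))))) hden
  -- minimum of ϱ on [0, R]
  obtain ⟨x₀, hx₀, hmin⟩ :=
    isCompact_Icc.exists_isMinOn (nonempty_Icc.2 hR.le)
      (hϱ.continuousOn.mono (fun x (hx : x ∈ Icc (0:ℝ) R) => hx.1))
  set m : ℝ := ϱ x₀ with hm_def
  have hm : 0 < m := hϱpos x₀ hx₀.1
  have hmle : ∀ x ∈ Icc (0:ℝ) R, m ≤ ϱ x := fun x hx => hmin hx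
  -- derivative of W at R
  have hAdR : HasDerivAt A (deriv A R) R := by
    have h1 : ContDiffAt ℝ (⊤ : ℕ∞) A R := by
      rw [hAfun]
      exact ((hϱ.contDiffAt (Ici_mem_nhds hR)).mul ((hξ.contDiffAt (Ici_mem_nhds hR)).pow _))
    exact (h1.differentiableAt (by simp)).hasDerivAt
  set k : ℝ := c ^ 2 * (2 * V R * A R) - 2 * A R * deriv A R with hk_def
  have hk : 0 < k := by
    have h2 : c ^ 2 * V R ^ 2 = A R ^ 2 := by linear_combination (c * V R + A R) * hcV
    have h3 : k * V R = 2 * A R * (A R ^ 2 - deriv A R * V R) := by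
      rw [hk_def]; linear_combination (2 * A R) * h2
    have h4 : 0 < k * V R := by
      rw [h3]; exact mul_pos (by linarith) (by linarith)
    by_contra hcon
    push_neg at hcon
    have h5 : 0 ≤ -k * V R := mul_nonneg (neg_nonneg.mpr hcon) hVR.le
    nlinarith [h4, h5]
  have hWd : HasDerivAt (fun ς => A ς ^ 2 - c ^ 2 * V ς ^ 2) (-k) R := by
    have h1 := (hAdR.pow 2).sub (((hVderiv R hR).pow 2).const_mul (c ^ 2))
    exact h1.congr_deriv (by rw [hk_def]; push_cast; ring)
  -- lower bound for W near R
  obtain ⟨a₁, ha₁, hIoo⟩ : ∃ a₁ ∈ Iio R, ∀ ς ∈ Ioo a₁ R,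
      k / 2 * (R - ς) < A ς ^ 2 - c ^ 2 * V ς ^ 2 := by
    have hsl := hasDerivAt_iff_tendsto_slope.mp hWd
    have hev : ∀ᶠ ς in 𝓝[≠] R, slope (fun ς => A ς ^ 2 - c ^ 2 * V ς ^ 2) R ς < -(k/2) :=
      hsl.eventually_lt_const (by linarith)
    have hev2 : ∀ᶠ ς in 𝓝[<] R, slope (fun ς => A ς ^ 2 - c ^ 2 * V ς ^ 2) R ς < -(k/2) :=
      hev.filter_mono (nhdsWithin_mono _ (fun x hx => ne_of_lt hx))
    obtain ⟨a₁, ha₁, hsub⟩ := mem_nhdsLT_iff_exists_Ioo_subset.mp hev2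
    refine ⟨a₁, ha₁, fun ς hς => ?_⟩
    have h3 := hsub hς
    simp only [mem_setOf_eq, slope_def_field] at h3
    rw [hWR0] at h3
    have hςR : ς - R < 0 := by linarith [hς.2]
    have h4 := (div_lt_iff_of_neg hςR).mp h3
    have h5 : k / 2 * (R - ς) = -(k/2) * (ς - R) := by ring
    linarith
  set r₁ : ℝ := max a₁ (R / 2) with hr₁_def
  have hr₁0 : 0 < r₁ := lt_of_lt_of_le (by linarith) (le_max_right _ _)
  have hr₁R : r₁ < R := max_lt (mem_Iio.mp ha₁) (by linarith)
  have hWlb : ∀ ς ∈ Ioo r₁ R, k / 2 * (R - ς) < A ς ^ 2 - c ^ 2 * V ς ^ 2 := by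
    intro ς hς
    exact hIoo ς ⟨lt_of_le_of_lt (le_max_left _ _) hς.1, hς.2⟩
  -- integrability of g on [r₁, R]
  set C : ℝ := c * V R / (m * Real.sqrt (k / 2)) with hC_def
  have hC : 0 < C := div_pos (mul_pos hc hVR) (mul_pos hm (Real.sqrt_pos.mpr (by linarith)))
  have hInt1 : IntervalIntegrable g volume r₁ R := by
    have h1 : IntervalIntegrable (fun x : ℝ => x ^ (-(1/2) : ℝ)) volume (R - r₁) (R - R) :=
      intervalIntegral.intervalIntegrable_rpow' (by norm_num)
    have h2 := (h1.comp_sub_left R).const_mul C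
    have h3 : IntervalIntegrable (fun ς => C * (R - ς) ^ (-(1/2) : ℝ)) volume r₁ R := by
      have e1 : R - (R - r₁) = r₁ := by ring
      have e2 : R - (R - R) = R := by ring
      rwa [e1, e2] at h2
    apply h3.mono_fun
    · have hco : ContinuousOn g (Ioo r₁ R) := fun x hx =>
        (hgcontAt x (lt_trans hr₁0 hx.1) hx.2).continuousWithinAt
      have h4 := hco.aestronglyMeasurable (μ := volume) measurableSet_Ioo
      rw [uIoc_of_le hr₁R.le, ← Measure.restrict_congr_set Ioo_ae_eq_Ioc]
      exact h4
    · rw [uIoc_of_le hr₁R.le]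
      rw [Filter.EventuallyLE, ae_restrict_iff' measurableSet_Ioc]
      refine Filter.Eventually.of_forall (fun ς hς => ?_)
      rcases hς.2.eq_or_lt with h | h
      · rw [h, hgR, norm_zero, sub_self,
          Real.zero_rpow (by norm_num : (-(1/2):ℝ) ≠ 0), mul_zero, norm_zero]
      · have h0ς : 0 < ς := lt_trans hr₁0 hς.1
        have hWς := hW ς h0ς h
        have hWlbς := hWlb ς ⟨hς.1, h⟩
        have hϱς := hϱpos ς h0ς.le
        have hsς : 0 < Real.sqrt (A ς ^ 2 - c ^ 2 * V ς ^ 2) := Real.sqrt_pos.mpr hWς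
        have hVς := hVpos ς h0ς
        have hRς : 0 < R - ς := by linarith
        have hlhs : ‖g ς‖ = c * V ς / (ϱ ς * Real.sqrt (A ς ^ 2 - c ^ 2 * V ς ^ 2)) := by
          rw [hg, Real.norm_eq_abs, abs_div, abs_of_pos (mul_pos hϱς hsς),
            abs_of_nonpos (by rw [neg_mul]; exact neg_nonpos.mpr (mul_pos hc hVς).le : -c * V ς ≤ 0)]
          ring_nf
        rw [hlhs]
        have hden : m * Real.sqrt (k/2) * Real.sqrt (R - ς)
            ≤ ϱ ς * Real.sqrt (A ς ^ 2 - c ^ 2 * V ς ^ 2) := by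
          have h5 : Real.sqrt (k/2) * Real.sqrt (R - ς) = Real.sqrt (k/2 * (R - ς)) :=
            (Real.sqrt_mul (by linarith) _).symm
          have h6 : Real.sqrt (k/2 * (R - ς)) ≤ Real.sqrt (A ς ^ 2 - c ^ 2 * V ς ^ 2) :=
            Real.sqrt_le_sqrt hWlbς.le
          calc m * Real.sqrt (k/2) * Real.sqrt (R - ς)
              = m * (Real.sqrt (k/2) * Real.sqrt (R - ς)) := by ring
            _ ≤ ϱ ς * (Real.sqrt (k/2) * Real.sqrt (R - ς)) := by
                apply mul_le_mul_of_nonneg_right (hmle ς ⟨h0ς.le, h.le⟩)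
                positivity
            _ ≤ ϱ ς * Real.sqrt (A ς ^ 2 - c ^ 2 * V ς ^ 2) := by
                apply mul_le_mul_of_nonneg_left _ hϱς.le
                rw [h5]; exact h6
        have hnum : c * V ς ≤ c * V R :=
          mul_le_mul_of_nonneg_left (hVle ς h0ς.le h.le) hc.le
        have hrhs : ‖C * (R - ς) ^ (-(1/2) : ℝ)‖
            = c * V R / (m * Real.sqrt (k/2) * Real.sqrt (R - ς)) := by
          rw [Real.norm_eq_abs, abs_of_nonneg (by positivity),
            Real.rpow_neg hRς.le, ← Real.sqrt_eq_rpow]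
          rw [hC_def]
          field_simp
        rw [hrhs]
        exact div_le_div₀ (by positivity) hnum
          (by positivity) hden
  -- integrability of g on [0, r₁]
  have hInt0 : IntervalIntegrable g volume 0 r₁ := by
    set a : ℝ := A r₁ / V r₁ with ha_def
    have hca : c < a := hmono (mem_Ioi.2 hr₁0) (mem_Ioi.2 hR) hr₁R
    have hδ : 0 < 1 - (c/a)^2 := by
      have h1 : 0 < c / a := div_pos hc (lt_trans hc hca)
      have h2 : c / a < 1 := (div_lt_one (lt_trans hc hca)).mpr hca
      have h3 : 1 - (c/a)^2 = (1 - c/a) * (1 + c/a) := by ring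
      rw [h3]
      exact mul_pos (by linarith) (by linarith)
    have ha0 : 0 < a := lt_trans hc hca
    set K : ℝ := (c/a) / (m * Real.sqrt (1 - (c/a)^2)) with hK_def
    have hK : 0 ≤ K :=
      (div_pos (div_pos hc ha0) (mul_pos hm (Real.sqrt_pos.mpr hδ))).le
    apply (intervalIntegrable_const (c := K)).mono_fun
    · have hco : ContinuousOn g (Ioc 0 r₁) := fun x hx =>
        (hgcontAt x hx.1 (lt_of_le_of_lt hx.2 hr₁R)).continuousWithinAt
      have h4 := hco.aestronglyMeasurable (μ := volume) measurableSet_Ioc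
      rw [uIoc_of_le hr₁0.le]
      exact h4
    · rw [uIoc_of_le hr₁0.le]
      rw [Filter.EventuallyLE, ae_restrict_iff' measurableSet_Ioc]
      refine Filter.Eventually.of_forall (fun ς hς => ?_)
      have h0ς : 0 < ς := hς.1
      have hςR : ς < R := lt_of_le_of_lt hς.2 hr₁R
      have hWς := hW ς h0ς hςR
      have hϱς := hϱpos ς h0ς.le
      have hVς := hVpos ς h0ς
      have hAς := hApos ς h0ς
      have hsς : 0 < Real.sqrt (A ς ^ 2 - c ^ 2 * V ς ^ 2) := Real.sqrt_pos.mpr hWς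
      have hale : a ≤ A ς / V ς := by
        rcases hς.2.eq_or_lt with h | h
        · rw [h]
        · exact (hmono (mem_Ioi.2 h0ς) (mem_Ioi.2 hr₁0) h).le
      have hVA : a * V ς ≤ A ς := (le_div_iff₀ hVς).mp hale
      have hcVA : c * V ς ≤ (c/a) * A ς := by
        have h6 : (c/a) * A ς - c * V ς = (c/a) * (A ς - a * V ς) := by
          field_simp
        have h7 : 0 ≤ (c/a) * (A ς - a * V ς) :=
          mul_nonneg (div_pos hc ha0).le (by linarith)
        linarith [h6, h7]
      have hWlbς : (1 - (c/a)^2) * A ς ^ 2 ≤ A ς ^ 2 - c ^ 2 * V ς ^ 2 := by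
        have h1 : (c * V ς)^2 ≤ ((c/a) * A ς)^2 :=
          pow_le_pow_left₀ (mul_pos hc hVς).le hcVA 2
        have h2 : (1 - (c/a)^2) * A ς ^ 2 = A ς ^ 2 - ((c/a) * A ς)^2 := by ring
        have h3 : c ^ 2 * V ς ^ 2 = (c * V ς)^2 := by ring
        rw [h2, h3]
        linarith
      have hlhs : ‖g ς‖ = c * V ς / (ϱ ς * Real.sqrt (A ς ^ 2 - c ^ 2 * V ς ^ 2)) := by
        rw [hg, Real.norm_eq_abs, abs_div, abs_of_pos (mul_pos hϱς hsς),
          abs_of_nonpos (by rw [neg_mul]; exact neg_nonpos.mpr (mul_pos hc hVς).le : -c * V ς ≤ 0)]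
        ring_nf
      rw [hlhs, Real.norm_eq_abs, abs_of_nonneg hK]
      have hden : m * Real.sqrt (1 - (c/a)^2) * A ς
          ≤ ϱ ς * Real.sqrt (A ς ^ 2 - c ^ 2 * V ς ^ 2) := by
        have h5 : Real.sqrt (1 - (c/a)^2) * A ς = Real.sqrt ((1 - (c/a)^2) * A ς ^ 2) := by
          rw [Real.sqrt_mul hδ.le, Real.sqrt_sq hAς.le]
        calc m * Real.sqrt (1 - (c/a)^2) * A ς
            = m * (Real.sqrt (1 - (c/a)^2) * A ς) := by ring
          _ ≤ ϱ ς * (Real.sqrt (1 - (c/a)^2) * A ς) := by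
              apply mul_le_mul_of_nonneg_right (hmle ς ⟨h0ς.le, hςR.le⟩)
              positivity
          _ ≤ ϱ ς * Real.sqrt (A ς ^ 2 - c ^ 2 * V ς ^ 2) := by
              apply mul_le_mul_of_nonneg_left _ hϱς.le
              rw [h5]
              exact Real.sqrt_le_sqrt hWlbς
      have hKeq : K = (c/a) * A ς / (m * Real.sqrt (1 - (c/a)^2) * A ς) := by
        rw [hK_def]
        exact (mul_div_mul_right _ _ hAς.ne').symm
      rw [hKeq]
      exact div_le_div₀ (by positivity) hcVA (by positivity) hden
  have hInt : IntervalIntegrable g volume 0 R := hInt0.trans hInt1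
  have hIntSub : ∀ x ∈ Icc (0:ℝ) R, ∀ y ∈ Icc (0:ℝ) R, IntervalIntegrable g volume x y := by
    intro x hx y hy
    exact hInt.mono_set (uIcc_subset_uIcc (Icc_subset_uIcc hx) (Icc_subset_uIcc hy))
  have hRmem : R ∈ Icc (0:ℝ) R := ⟨hR.le, le_rfl⟩
  -- nonnegativity
  have hvRnonneg : ∀ r ∈ Icc (0:ℝ) R, 0 ≤ vR r := by
    intro r hr
    show 0 ≤ ∫ ς in R..r, g ς
    rw [intervalIntegral.integral_symm]
    have h1 : 0 ≤ ∫ ς in r..R, -g ς :=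
      intervalIntegral.integral_nonneg hr.2
        (fun u hu => neg_nonneg.2 (hgnonpos u ⟨hr.1.trans hu.1, hu.2⟩))
    rw [intervalIntegral.integral_neg] at h1
    linarith
  refine ⟨intervalIntegral.integral_same, hvRnonneg, ?_, ?_, ?_⟩
  · -- antitone
    intro x hx y hy hxy
    show (∫ ς in R..y, g ς) ≤ ∫ ς in R..x, g ς
    have h1 : (∫ ς in R..x, g ς) - (∫ ς in R..y, g ς) = ∫ ς in y..x, g ς :=
      intervalIntegral.integral_interval_sub_left (hIntSub R hRmem x hx) (hIntSub R hRmem y hy)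
    have h2 : 0 ≤ ∫ ς in x..y, -g ς :=
      intervalIntegral.integral_nonneg hxy
        (fun u hu => neg_nonneg.2 (hgnonpos u ⟨hx.1.trans hu.1, hu.2.trans hy.2⟩))
    rw [intervalIntegral.integral_neg] at h2
    have h3 : (∫ ς in y..x, g ς) = -∫ ς in x..y, g ς := intervalIntegral.integral_symm _ _
    linarith
  · -- (iii)
    intro r hr
    have hcoOn : ContinuousOn g (Ioo 0 R) := fun x hx =>
      (hgcontAt x hx.1 hx.2).continuousWithinAt
    exact intervalIntegral.integral_hasDerivAt_right
      (hIntSub R hRmem r ⟨hr.1.le, hr.2.le⟩)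
      ⟨Ioo 0 R, Ioo_mem_nhds hr.1 hr.2, hcoOn.aestronglyMeasurable measurableSet_Ioo⟩
      (hgcontAt r hr.1 hr.2)
  · -- (iv)
    intro r hr
    have φeq : ∀ ρ, 0 < ρ → ρ < R →
        g ρ / Real.sqrt ((ϱ ρ)⁻¹ ^ 2 + g ρ ^ 2) = -(c * (V ρ / A ρ)) := by
      intro ρ h1 h2
      have hWρ := hW ρ h1 h2
      have hϱρ := hϱpos ρ h1.le
      have hVρ := hVpos ρ h1
      have hAρ := hApos ρ h1
      have hs : 0 < Real.sqrt (A ρ ^ 2 - c ^ 2 * V ρ ^ 2) := Real.sqrt_pos.mpr hWρ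
      have hs2 : Real.sqrt (A ρ ^ 2 - c ^ 2 * V ρ ^ 2) ^ 2 = A ρ ^ 2 - c ^ 2 * V ρ ^ 2 :=
        Real.sq_sqrt hWρ.le
      have h3 : (ϱ ρ)⁻¹ ^ 2 + g ρ ^ 2
          = (A ρ / (ϱ ρ * Real.sqrt (A ρ ^ 2 - c ^ 2 * V ρ ^ 2))) ^ 2 := by
        rw [hg]
        simp only [div_pow, mul_pow]
        rw [hs2]
        field_simp
        ring
      rw [h3, Real.sqrt_sq (by positivity), hg]
      field_simp
    have hΦev : (fun ρ => g ρ / Real.sqrt ((ϱ ρ)⁻¹ ^ 2 + g ρ ^ 2))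
        =ᶠ[nhds r] fun ρ => -(c * (V ρ / A ρ)) :=
      Filter.eventually_of_mem (Ioo_mem_nhds hr.1 hr.2)
        (fun ρ hρ => φeq ρ hρ.1 hρ.2)
    have hϱd : HasDerivAt ϱ (deriv ϱ r) r :=
      ((hϱ.contDiffAt (Ici_mem_nhds hr.1)).differentiableAt (by simp)).hasDerivAt
    have hξd : HasDerivAt ξ (deriv ξ r) r :=
      ((hξ.contDiffAt (Ici_mem_nhds hr.1)).differentiableAt (by simp)).hasDerivAt
    obtain ⟨m', hm'⟩ : ∃ m', n = m' + 2 := ⟨n - 2, by omega⟩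
    subst hm'
    have hAd : HasDerivAt A
        (deriv ϱ r * ξ r ^ (m' + 1) + ϱ r * ((m' + 1) * ξ r ^ m' * deriv ξ r)) r := by
      rw [hAfun]
      have := hϱd.mul (hξd.pow (m' + 2 - 1))
      exact this.congr_deriv (by simp)
    have hVd := hVderiv r hr.1
    have hAr : A r = ϱ r * ξ r ^ (m' + 1) := by rw [hA]; norm_num
    have hAr0 : A r ≠ 0 := (hApos r hr.1).ne'
    have hψ : HasDerivAt (fun ρ => -(c * (V ρ / A ρ)))
        (-(c * ((A r * A r - V r * (deriv ϱ r * ξ r ^ (m' + 1)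
          + ϱ r * ((m' + 1) * ξ r ^ m' * deriv ξ r))) / A r ^ 2))) r :=
      ((hVd.div hAd hAr0).const_mul c).neg
    have hval : ((m' + 2 : ℕ):ℝ) * H R -
        (g r / Real.sqrt ((ϱ r)⁻¹ ^ 2 + g r ^ 2)) *
          (deriv ϱ r / ϱ r + (((m' + 2 : ℕ):ℝ) - 1) * deriv ξ r / ξ r)
        = -(c * ((A r * A r - V r * (deriv ϱ r * ξ r ^ (m' + 1)
          + ϱ r * ((m' + 1) * ξ r ^ m' * deriv ξ r))) / A r ^ 2)) := by
      rw [φeq r hr.1 hr.2, hnH]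
      have hϱr := hϱpos r hr.1.le
      have hξr := hξpos r hr.1
      rw [hAr]
      push_cast
      field_simp
      ring
    rw [hval]
    exact hψ.congr_of_eventuallyEq hΦev
end

section
/- Let n ≥ 1 be an integer, A : (0,∞) → (0,∞) a C¹ function integrable near 0, V(r) = ∫₀^r A(ς) dς, and H_R ∈ ℝ. Let I ⊆ ℝ be an interval and r, φ : I → ℝ differentiable functions with r(ς) > 0 for all ς ∈ I, satisfying the profile system r'(ς) = cos φ(ς) and φ'(ς) = −n H_R − (A'(r(ς))/A(r(ς))) sin φ(ς). Then the function ς ↦ A(r(ς)) sin φ(ς) + n H_R V(r(ς)) is constant on I. In particular, if 0 ∈ I, r(0) = R > 0, φ(0) = π/2 and n H_R = −A(R)/V(R), then A(r(ς)) sin φ(ς) = −n H_R V(r(ς)) for all ς ∈ I. -/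
open MeasureTheory Set

/-
Along a solution, with `c = n H_R`, the function
`F = A(r) sin φ + c V(r)` has derivative
`A'(r) cos φ sin φ + cos φ (-c - (A'(r)/A(r)) sin φ) A(r) + c A(r) cos φ = 0`,
since `V' = A` by the fundamental theorem of calculus. A function with vanishing derivative on
an interval is constant. For the particular solution, `F(0) = A(R) + c V(R) = 0` by the choice
of `c`, and `V(R) > 0` makes that choice legitimate.
-/

theorem Convex.eq_of_hasDerivWithinAt_zero {E : Type*} [NormedAddCommGroup E] [NormedSpace ℝ E]
    {f : ℝ → E} {s : Set ℝ} (hs : Convex ℝ s) (hf : ∀ x ∈ s, HasDerivWithinAt f 0 s x)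
    {x y : ℝ} (hx : x ∈ s) (hy : y ∈ s) : f x = f y := by
  have bound : ∀ z ∈ s, ‖(0 : E)‖ ≤ 0 := fun _ _ => norm_zero.le
  simpa only [(dist_eq_norm _ _).symm, zero_mul, dist_le_zero, eq_comm] using
    hs.norm_image_sub_le_of_norm_hasDerivWithin_le hf bound hx hy

theorem hasDerivAt_setIntegral_Ioc_right {E : Type*} [NormedAddCommGroup E] [NormedSpace ℝ E]
    [CompleteSpace E] {f : ℝ → E} {a x : ℝ} (hx : a < x) (hf : ContinuousOn f (Ioi a))
    (hint : IntegrableOn f (Ioc a x)) :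
    HasDerivAt (fun u => ∫ t in Ioc a u, f t) (f x) x := by
  have hFTC : HasDerivAt (fun u => ∫ t in a..u, f t) (f x) x :=
    intervalIntegral.integral_hasDerivAt_right
      ((intervalIntegrable_iff_integrableOn_Ioc_of_le hx.le).mpr hint)
      (hf.stronglyMeasurableAtFilter isOpen_Ioi x hx)
      (hf.continuousAt (isOpen_Ioi.mem_nhds hx))
  refine hFTC.congr_of_eventuallyEq ?_
  filter_upwards [isOpen_Ioi.mem_nhds hx] with u hu
  exact (intervalIntegral.integral_of_le hu.le).symm

theorem setIntegral_Ioc_pos {f : ℝ → ℝ} {a b : ℝ} (hab : a < b) (hint : IntegrableOn f (Ioc a b))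
    (hpos : ∀ x ∈ Ioc a b, 0 < f x) : 0 < ∫ x in Ioc a b, f x := by
  rw [← intervalIntegral.integral_of_le hab.le]
  exact intervalIntegral.intervalIntegral_pos_of_pos_on
    ((intervalIntegrable_iff_integrableOn_Ioc_of_le hab.le).mpr hint)
    (fun x hx => hpos x (Ioo_subset_Ioc_self hx)) hab

noncomputable def profileFirstIntegral (A V r φ : ℝ → ℝ) (c t : ℝ) : ℝ :=
  A (r t) * Real.sin (φ t) + c * V (r t)

theorem hasDerivWithinAt_profileFirstIntegral {A V r φ : ℝ → ℝ} {s : Set ℝ} {c t A' : ℝ}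
    (hA : HasDerivAt A A' (r t)) (hAne : A (r t) ≠ 0) (hV : HasDerivAt V (A (r t)) (r t))
    (hr : HasDerivWithinAt r (Real.cos (φ t)) s t)
    (hφ : HasDerivWithinAt φ (-c - A' / A (r t) * Real.sin (φ t)) s t) :
    HasDerivWithinAt (profileFirstIntegral A V r φ c) 0 s t := by
  have hAr := hA.comp_hasDerivWithinAt t hr
  have hsinφ := (Real.hasDerivAt_sin (φ t)).comp_hasDerivWithinAt t hφ
  have hVr := hV.comp_hasDerivWithinAt t hr
  refine ((hAr.mul hsinφ).add (hVr.const_mul c)).congr_deriv ?_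
  have hcancel : A' / A (r t) * A (r t) = A' := div_mul_cancel₀ _ hAne
  simp only [Function.comp_apply]
  linear_combination (-(Real.cos (φ t) * Real.sin (φ t))) * hcancel

theorem profileFirstIntegral_eq_zero_of_initial {A V r φ : ℝ → ℝ} {c R : ℝ} (hVR : V R ≠ 0)
    (hr0 : r 0 = R) (hφ0 : φ 0 = Real.pi / 2) (hc : c = -(A R / V R)) :
    profileFirstIntegral A V r φ c 0 = 0 := by
  rw [profileFirstIntegral, hr0, hφ0, Real.sin_pi_div_two, hc]
  field_simp
  ring

theorem stmt_4_general
    (n : ℕ)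
    (A : ℝ → ℝ)
    (hApos : ∀ r, 0 < r → 0 < A r)
    (hAC1 : ContDiffOn ℝ 1 A (Ioi 0))
    (hAint : ∀ r, 0 < r → IntegrableOn A (Ioc 0 r))
    (V : ℝ → ℝ) (hV : ∀ r, V r = ∫ ς in Ioc (0:ℝ) r, A ς)
    (H_R : ℝ)
    (I : Set ℝ) (hI : I.OrdConnected)
    (r φ : ℝ → ℝ)
    (hrpos : ∀ t ∈ I, 0 < r t)
    (hr' : ∀ t ∈ I, HasDerivWithinAt r (Real.cos (φ t)) I t)
    (hφ' : ∀ t ∈ I, HasDerivWithinAt φ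
      (-(n:ℝ) * H_R - (deriv A (r t) / A (r t)) * Real.sin (φ t)) I t) :
    (∀ s ∈ I, ∀ t ∈ I,
      A (r s) * Real.sin (φ s) + (n:ℝ) * H_R * V (r s)
        = A (r t) * Real.sin (φ t) + (n:ℝ) * H_R * V (r t)) ∧
    (∀ R : ℝ, 0 < R → (0:ℝ) ∈ I → r 0 = R → φ 0 = Real.pi / 2 →
      (n:ℝ) * H_R = -(A R / V R) →
      ∀ t ∈ I, A (r t) * Real.sin (φ t) = -((n:ℝ) * H_R) * V (r t)) := by
  have hV' : ∀ x, 0 < x → HasDerivAt V (A x) x := fun x hx => by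
    simpa only [← funext hV] using
      hasDerivAt_setIntegral_Ioc_right hx hAC1.continuousOn (hAint x hx)
  have hF' : ∀ t ∈ I, HasDerivWithinAt (profileFirstIntegral A V r φ (n * H_R)) 0 I t := by
    intro t ht
    have hrt := hrpos t ht
    refine hasDerivWithinAt_profileFirstIntegral ?_ (hApos _ hrt).ne' (hV' _ hrt) (hr' t ht)
      (by simpa only [neg_mul] using hφ' t ht)
    exact ((hAC1.contDiffAt (isOpen_Ioi.mem_nhds hrt)).differentiableAt one_ne_zero).hasDerivAt
  have hconst : ∀ s ∈ I, ∀ t ∈ I, profileFirstIntegral A V r φ (n * H_R) s =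
      profileFirstIntegral A V r φ (n * H_R) t := fun s hs t ht =>
    (convex_iff_ordConnected.mpr hI).eq_of_hasDerivWithinAt_zero hF' hs ht
  refine ⟨hconst, fun R hR h0I hr0 hφ0 hc t ht => ?_⟩
  have hVR : 0 < V R := hV R ▸ setIntegral_Ioc_pos hR (hAint R hR) fun x hx => hApos x hx.1
  have hF0 := profileFirstIntegral_eq_zero_of_initial hVR.ne' hr0 hφ0 hc
  have hFt := (hconst t ht 0 h0I).trans hF0
  rw [profileFirstIntegral] at hFt
  linarith

/-- First integral of the profile system.  Let `n ≥ 1`,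
`A : (0,∞) → (0,∞)` be `C¹` and integrable near `0`, `V(r) = ∫₀^r A`,
`H_R ∈ ℝ`.  If on an interval `I` the differentiable functions `r, φ`
satisfy `r' = cos φ` and `φ' = −n H_R − (A'(r)/A(r)) sin φ` with `r > 0`,
then `ς ↦ A(r(ς)) sin φ(ς) + n H_R V(r(ς))` is constant on `I`.
In particular, if `0 ∈ I`, `r(0) = R > 0`, `φ(0) = π/2` and
`n H_R = −A(R)/V(R)`, then `A(r) sin φ = −n H_R V(r)` on `I`. -/
theorem stmt_4
    (n : ℕ) (hn : 1 ≤ n)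
    (A : ℝ → ℝ)
    (hApos : ∀ r, 0 < r → 0 < A r)
    (hAC1 : ContDiffOn ℝ 1 A (Ioi 0))
    (hAint : ∀ r, 0 < r → IntegrableOn A (Ioc 0 r))
    (V : ℝ → ℝ) (hV : ∀ r, V r = ∫ ς in Ioc (0:ℝ) r, A ς)
    (H_R : ℝ)
    (I : Set ℝ) (hI : I.OrdConnected)
    (r φ : ℝ → ℝ)
    (hrpos : ∀ t ∈ I, 0 < r t)
    (hr' : ∀ t ∈ I, HasDerivWithinAt r (Real.cos (φ t)) I t)
    (hφ' : ∀ t ∈ I, HasDerivWithinAt φ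
      (-(n:ℝ) * H_R - (deriv A (r t) / A (r t)) * Real.sin (φ t)) I t) :
    (∀ s ∈ I, ∀ t ∈ I,
      A (r s) * Real.sin (φ s) + (n:ℝ) * H_R * V (r s)
        = A (r t) * Real.sin (φ t) + (n:ℝ) * H_R * V (r t)) ∧
    (∀ R : ℝ, 0 < R → (0:ℝ) ∈ I → r 0 = R → φ 0 = Real.pi / 2 →
      (n:ℝ) * H_R = -(A R / V R) →
      ∀ t ∈ I, A (r t) * Real.sin (φ t) = -((n:ℝ) * H_R) * V (r t)) :=
  stmt_4_general n A hApos hAC1 hAint V hV H_R I hI r φ hrpos hr' hφ'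
end

section
/- Let ρ₀ > 0. Assume H is differentiable with H'(ς) > 0 for all ς ∈ (0, ρ₀], and that M := sup_{ς ∈ (0,ρ₀]} H(ς)²/(ϱ(ς) H'(ς)) is finite. Then for every R ∈ (0, ρ₀] and every r ∈ [0,R], the integral v_R(r) := ∫_r^R (−n H(R) V(ς)) / (ϱ(ς) √(A(ς)² − n² H(R)² V(ς)²)) dς converges and satisfies v_R(r) ≤ −M/H(ρ₀). -/
open MeasureTheory Set

lemma aux_stmt9
    (ϱ H H' : ℝ → ℝ) (ρ₀ : ℝ) (hρ₀ : 0 < ρ₀)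
    (hϱc : ContinuousOn ϱ (Ici 0))
    (hϱpos : ∀ r, 0 ≤ r → 0 < ϱ r)
    (hH' : ∀ ς ∈ Ioc (0:ℝ) ρ₀, HasDerivAt H (H' ς) ς)
    (hH'pos : ∀ ς ∈ Ioc (0:ℝ) ρ₀, 0 < H' ς)
    (hHneg : ∀ ς ∈ Ioc (0:ℝ) ρ₀, H ς < 0)
    (M : ℝ)
    (hM : ∀ ς ∈ Ioc (0:ℝ) ρ₀, H ς ^ 2 / (ϱ ς * H' ς) ≤ M)
    (R : ℝ) (hR : R ∈ Ioc (0:ℝ) ρ₀) (r : ℝ) (hr : r ∈ Icc (0:ℝ) R) :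
    IntegrableOn (fun ς => (-H R) / (ϱ ς * Real.sqrt (H ς ^ 2 - H R ^ 2))) (Ioo r R) ∧
      (∫ ς in Ioo r R, (-H R) / (ϱ ς * Real.sqrt (H ς ^ 2 - H R ^ 2))) ≤ -M / H ρ₀ := by
  have hρ₀mem : ρ₀ ∈ Ioc (0:ℝ) ρ₀ := ⟨hρ₀, le_rfl⟩
  have hHρ₀ : H ρ₀ < 0 := hHneg ρ₀ hρ₀mem
  have hbneg : H R < 0 := hHneg R hR
  have hMpos : 0 < M := by
    have h1 := hM ρ₀ hρ₀mem
    have h2 : 0 < H ρ₀ ^ 2 / (ϱ ρ₀ * H' ρ₀) :=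
      div_pos (by nlinarith) (mul_pos (hϱpos ρ₀ hρ₀.le) (hH'pos ρ₀ hρ₀mem))
    linarith
  have hLpos : 0 < -M / H ρ₀ := div_pos_of_neg_of_neg (by linarith) hHρ₀
  -- strict monotonicity of H on Ioc 0 ρ₀
  have Hcont : ContinuousOn H (Ioc 0 ρ₀) :=
    fun x hx => (hH' x hx).continuousAt.continuousWithinAt
  have Hmono : StrictMonoOn H (Ioc (0:ℝ) ρ₀) := by
    apply strictMonoOn_of_deriv_pos (convex_Ioc 0 ρ₀) Hcont
    intro x hx
    rw [interior_Ioc] at hx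
    rw [(hH' x ⟨hx.1, hx.2.le⟩).deriv]
    exact hH'pos x ⟨hx.1, hx.2.le⟩
  have hHRρ₀ : H R ≤ H ρ₀ := Hmono.monotoneOn hR hρ₀mem hR.2
  rcases eq_or_lt_of_le hr.2 with hrR | hrR
  · subst hrR
    simp only [Ioo_self]
    exact ⟨integrableOn_empty, by simp [hLpos.le]⟩
  -- r < R
  set s : ℝ → ℝ := fun ς => Real.sqrt (H ς ^ 2 - H R ^ 2) with hs_def
  set f : ℝ → ℝ := fun ς => (-H R) / (ϱ ς * s ς) with hf_def
  set g : ℝ → ℝ := fun ς => -(M * (s ς / (H R * H ς))) with hg_def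
  set D : ℝ → ℝ := fun ς => M * (-(H R) * H' ς / (H ς ^ 2 * s ς)) with hD_def
  -- basic facts on Ioo 0 R / Icc etc.
  have hmem : ∀ ς, 0 < ς → ς ≤ R → ς ∈ Ioc (0:ℝ) ρ₀ := fun ς h1 h2 => ⟨h1, h2.trans hR.2⟩
  have hHneg' : ∀ ς, 0 < ς → ς ≤ R → H ς < 0 := fun ς h1 h2 => hHneg ς (hmem ς h1 h2)
  have hsq_pos : ∀ ς, 0 < ς → ς < R → 0 < H ς ^ 2 - H R ^ 2 := by
    intro ς h1 h2
    have hlt : H ς < H R := Hmono (hmem ς h1 h2.le) hR h2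
    have := hHneg' ς h1 h2.le
    nlinarith
  have hspos : ∀ ς, 0 < ς → ς < R → 0 < s ς := by
    intro ς h1 h2
    exact Real.sqrt_pos.2 (hsq_pos ς h1 h2)
  have hfpos : ∀ ς, 0 < ς → ς < R → 0 < f ς := by
    intro ς h1 h2
    exact div_pos (by linarith) (mul_pos (hϱpos ς h1.le) (hspos ς h1 h2))
  -- derivative of g
  have hgderiv : ∀ ς ∈ Ioo (0:ℝ) R, HasDerivAt g (D ς) ς := by
    intro ς hς
    have hςm := hmem ς hς.1 hς.2.le
    have hde := hH' ς hςm
    have hHςneg := hHneg' ς hς.1 hς.2.le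
    have hsqp := hsq_pos ς hς.1 hς.2
    have hsp := hspos ς hς.1 hς.2
    have h1 : HasDerivAt (fun x => H x ^ 2 - H R ^ 2) (2 * H ς * H' ς) ς := by
      have := (hde.fun_pow 2).sub_const (H R ^ 2)
      exact this.congr_deriv (by norm_num)
    have hs : HasDerivAt s (2 * H ς * H' ς / (2 * s ς)) ς := h1.sqrt (ne_of_gt hsqp)
    have hden : HasDerivAt (fun x => H R * H x) (H R * H' ς) ς := hde.const_mul (H R)
    have hbHne : H R * H ς ≠ 0 := (mul_pos_of_neg_of_neg hbneg hHςneg).ne'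
    have hq := (hs.fun_div hden hbHne).const_mul M
    have hg' := hq.fun_neg
    refine hg'.congr_deriv ?_
    have hs2 : s ς ^ 2 = H ς ^ 2 - H R ^ 2 := Real.sq_sqrt hsqp.le
    have hHne : H ς ≠ 0 := hHςneg.ne
    have hbne : H R ≠ 0 := hbneg.ne
    show _ = M * (-(H R) * H' ς / (H ς ^ 2 * s ς))
    field_simp
    linear_combination H' ς * hs2
  have hDpos : ∀ ς ∈ Ioo (0:ℝ) R, 0 ≤ D ς := by
    intro ς hς
    have hςm := hmem ς hς.1 hς.2.le
    have := hHneg' ς hς.1 hς.2.le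
    have h1 := hH'pos ς hςm
    have h2 := hspos ς hς.1 hς.2
    have : (0:ℝ) < -H R := by linarith
    positivity
  have hfleD : ∀ ς ∈ Ioo (0:ℝ) R, f ς ≤ D ς := by
    intro ς hς
    have hςm := hmem ς hς.1 hς.2.le
    have hϱp := hϱpos ς hς.1.le
    have hH'p := hH'pos ς hςm
    have hsp := hspos ς hς.1 hς.2
    have hHςneg := hHneg' ς hς.1 hς.2.le
    have hbd : H ς ^ 2 ≤ M * (ϱ ς * H' ς) :=
      (div_le_iff₀ (mul_pos hϱp hH'p)).1 (hM ς hςm)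
    have hDeq : D ς = (M * (-H R) * H' ς) / (H ς ^ 2 * s ς) := by
      rw [hD_def]; ring
    rw [hf_def, hDeq]
    have hHsq : 0 < H ς ^ 2 := by nlinarith
    rw [div_le_div_iff₀ (mul_pos hϱp hsp) (mul_pos hHsq hsp)]
    nlinarith [mul_le_mul_of_nonneg_left hbd (mul_nonneg (mul_nonneg (neg_nonneg.2 hbneg.le) hsp.le) hHsq.le)]
  -- continuity of g on Icc a R for 0 < a
  have hgcont : ∀ a, 0 < a → ContinuousOn g (Icc a R) := by
    intro a ha
    have hsub : Icc a R ⊆ Ioc (0:ℝ) ρ₀ := fun x hx => ⟨lt_of_lt_of_le ha hx.1, hx.2.trans hR.2⟩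
    have hHc : ContinuousOn H (Icc a R) := Hcont.mono hsub
    have hsc : ContinuousOn s (Icc a R) :=
      Real.continuous_sqrt.comp_continuousOn ((hHc.pow 2).sub continuousOn_const)
    exact ((hsc.div (continuousOn_const.mul hHc) (fun x hx =>
      (mul_pos_of_neg_of_neg hbneg (hHneg x (hsub hx))).ne')).const_smul M).neg
  -- continuity of f on Ioo 0 R
  have hfcont : ContinuousOn f (Ioo (0:ℝ) R) := by
    have hsub : Ioo (0:ℝ) R ⊆ Ioc 0 ρ₀ := fun x hx => ⟨hx.1, hx.2.le.trans hR.2⟩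
    have hHc : ContinuousOn H (Ioo (0:ℝ) R) := Hcont.mono hsub
    have hsc : ContinuousOn s (Ioo (0:ℝ) R) :=
      Real.continuous_sqrt.comp_continuousOn ((hHc.pow 2).sub continuousOn_const)
    exact continuousOn_const.div
      ((hϱc.mono (fun x hx => le_of_lt hx.1)).mul hsc)
      (fun x hx => (mul_pos (hϱpos x hx.1.le) (hspos x hx.1 hx.2)).ne')
  -- key per-a estimate
  have key : ∀ a ∈ Ioo r R, IntegrableOn f (Ioo a R) ∧
      (∫ ς in Ioo a R, f ς) ≤ -M / H ρ₀ := by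
    intro a ha
    have hapos : 0 < a := lt_of_le_of_lt hr.1 ha.1
    have haR : a < R := ha.2
    have hIoosub : Ioo a R ⊆ Ioo (0:ℝ) R := Ioo_subset_Ioo hapos.le le_rfl
    have hgder' : ∀ x ∈ Ioo a R, HasDerivAt g (D x) x := fun x hx => hgderiv x (hIoosub hx)
    have hDpos' : ∀ x ∈ Ioo a R, 0 ≤ D x := fun x hx => hDpos x (hIoosub hx)
    have hDint : IntegrableOn D (Ioc a R) :=
      intervalIntegral.integrableOn_deriv_of_nonneg (hgcont a hapos) hgder' hDpos'
    have hDintIoo : IntegrableOn D (Ioo a R) := hDint.mono_set Ioo_subset_Ioc_self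
    have hfmeas : AEStronglyMeasurable f (volume.restrict (Ioo a R)) :=
      (hfcont.mono hIoosub).aestronglyMeasurable measurableSet_Ioo
    have hfint : IntegrableOn f (Ioo a R) := by
      apply hDintIoo.mono' hfmeas
      filter_upwards [ae_restrict_mem measurableSet_Ioo] with ς hς
      rw [Real.norm_eq_abs, abs_of_nonneg (hfpos ς (hIoosub hς).1 (hIoosub hς).2).le]
      exact hfleD ς (hIoosub hς)
    refine ⟨hfint, ?_⟩
    have hftc : ∫ y in a..R, D y = g R - g a := by
      apply intervalIntegral.integral_eq_sub_of_hasDeriv_right_of_le haR.le (hgcont a hapos)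
        (fun x hx => (hgder' x hx).hasDerivWithinAt)
      rw [intervalIntegrable_iff_integrableOn_Ioc_of_le haR.le]
      exact hDint
    have hgR : g R = 0 := by
      simp [hg_def, hs_def]
    have hga : g a ≥ -(M / (-H ρ₀)) := by
      have hHa : H a < 0 := hHneg' a hapos haR.le
      have hsa : s a ≤ -H a := by
        rw [hs_def]
        calc Real.sqrt (H a ^ 2 - H R ^ 2) ≤ Real.sqrt (H a ^ 2) :=
              Real.sqrt_le_sqrt (by nlinarith)
          _ = |H a| := by rw [Real.sqrt_sq_eq_abs]
          _ = -H a := abs_of_neg hHa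
      have hbHa : 0 < H R * H a := mul_pos_of_neg_of_neg hbneg hHa
      have hGa : s a / (H R * H a) ≤ 1 / (-H R) := by
        rw [div_le_div_iff₀ hbHa (by linarith)]
        nlinarith [Real.sqrt_nonneg (H a ^ 2 - H R ^ 2)]
      have h2 : s a / (H R * H a) ≤ 1 / (-H ρ₀) :=
        hGa.trans (one_div_le_one_div_of_le (by linarith) (by linarith))
      rw [hg_def]
      simp only [ge_iff_le, neg_le_neg_iff]
      calc M * (s a / (H R * H a)) ≤ M * (1 / (-H ρ₀)) := by
            apply mul_le_mul_of_nonneg_left h2 hMpos.le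
        _ = M / (-H ρ₀) := by ring
    calc (∫ ς in Ioo a R, f ς) ≤ ∫ ς in Ioo a R, D ς :=
          setIntegral_mono_on hfint hDintIoo measurableSet_Ioo (fun x hx => hfleD x (hIoosub hx))
      _ = ∫ ς in Ioc a R, D ς := integral_Ioc_eq_integral_Ioo.symm
      _ = ∫ y in a..R, D y := (intervalIntegral.integral_of_le haR.le).symm
      _ = g R - g a := hftc
      _ ≤ 0 - (-(M / (-H ρ₀))) := by rw [hgR]; linarith [hga]
      _ = -M / H ρ₀ := by rw [zero_sub, neg_neg]; ring
  -- limit over a ↓ r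
  set F : ℝ → ENNReal := fun ς => ENNReal.ofReal (f ς) with hF_def
  set aseq : ℕ → ℝ := fun k => r + (R - r) / (k + 2) with haseq_def
  have haseq_mem : ∀ k : ℕ, aseq k ∈ Ioo r R := by
    intro k
    have hk2 : (1:ℝ) < (k:ℝ) + 2 := by
      have h : (0:ℝ) ≤ (k:ℝ) := Nat.cast_nonneg k
      linarith
    have hpos : 0 < (R - r) / ((k:ℝ) + 2) := div_pos (by linarith) (by positivity)
    have hlt : (R - r) / ((k:ℝ) + 2) < R - r := div_lt_self (by linarith) hk2
    constructor
    · simp only [haseq_def]; linarith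
    · simp only [haseq_def]; linarith
  have haseq_anti : ∀ k l : ℕ, k ≤ l → aseq l ≤ aseq k := by
    intro k l hkl
    simp only [haseq_def]
    have h1 : (0:ℝ) < (k:ℝ) + 2 := by positivity
    have h2 : ((k:ℝ) + 2) ≤ (l:ℝ) + 2 := by
      have : (k:ℝ) ≤ l := Nat.cast_le.2 hkl
      linarith
    have : (R - r) / ((l:ℝ) + 2) ≤ (R - r) / ((k:ℝ) + 2) := by
      apply div_le_div_of_nonneg_left (by linarith) h1 h2
    linarith
  have hsubIoo : ∀ k : ℕ, Ioo (aseq k) R ⊆ Ioo (0:ℝ) R :=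
    fun k => Ioo_subset_Ioo (le_trans hr.1 (haseq_mem k).1.le) le_rfl
  have hsubrR : ∀ k : ℕ, Ioo (aseq k) R ⊆ Ioo r R :=
    fun k => Ioo_subset_Ioo (haseq_mem k).1.le le_rfl
  have hfnonneg_ae : ∀ (t : Set ℝ), t ⊆ Ioo (0:ℝ) R → MeasurableSet t →
      0 ≤ᵐ[volume.restrict t] f := by
    intro t ht hmt
    filter_upwards [ae_restrict_mem hmt] with ς hς
    exact (hfpos ς (ht hς).1 (ht hς).2).le
  have hFk : ∀ k : ℕ, AEMeasurable ((Ioo (aseq k) R).indicator F) volume := by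
    intro k
    exact (aemeasurable_indicator_iff measurableSet_Ioo).2
      (((hfcont.mono (hsubIoo k)).aemeasurable measurableSet_Ioo).ennreal_ofReal)
  have hmono_ae : ∀ᵐ x : ℝ, Monotone fun k : ℕ => (Ioo (aseq k) R).indicator F x := by
    apply ae_of_all
    intro x k l hkl
    exact Set.indicator_le_indicator_of_subset
      (Ioo_subset_Ioo (haseq_anti k l hkl) le_rfl) (fun a => zero_le) x
  have hsup : (fun x => ⨆ k : ℕ, (Ioo (aseq k) R).indicator F x)
      = (Ioo r R).indicator F := by
    funext x
    by_cases hx : x ∈ Ioo r R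
    · obtain ⟨k, hk⟩ := exists_nat_gt ((R - r) / (x - r))
      have hxr : 0 < x - r := by linarith [hx.1]
      have hak : aseq k < x := by
        simp only [haseq_def]
        have h2 : (R - r) / (x - r) < (k:ℝ) + 2 := by linarith
        have : R - r < (x - r) * ((k:ℝ) + 2) := by
          rw [div_lt_iff₀ hxr] at h2; linarith
        have : (R - r) / ((k:ℝ) + 2) < x - r := by
          rw [div_lt_iff₀ (by positivity)]; linarith
        linarith
      have hxk : x ∈ Ioo (aseq k) R := ⟨hak, hx.2⟩
      apply le_antisymm
      · apply iSup_le
        intro l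
        exact Set.indicator_le_indicator_of_subset (hsubrR l) (fun a => zero_le) x
      · refine le_trans ?_ (le_iSup _ k)
        rw [Set.indicator_of_mem hxk, Set.indicator_of_mem hx]
    · have h0 : ∀ k : ℕ, (Ioo (aseq k) R).indicator F x = 0 :=
        fun k => Set.indicator_of_notMem (fun hc => hx (hsubrR k hc)) _
      simp [h0, Set.indicator_of_notMem hx]
  have hlin : (∫⁻ x in Ioo r R, F x) ≤ ENNReal.ofReal (-M / H ρ₀) := by
    rw [← lintegral_indicator measurableSet_Ioo, ← hsup, lintegral_iSup' hFk hmono_ae]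
    apply iSup_le
    intro k
    rw [lintegral_indicator measurableSet_Ioo]
    have hk := key (aseq k) (haseq_mem k)
    calc (∫⁻ x in Ioo (aseq k) R, F x)
        = ENNReal.ofReal (∫ x in Ioo (aseq k) R, f x) :=
          (ofReal_integral_eq_lintegral_ofReal hk.1
            (hfnonneg_ae _ (hsubIoo k) measurableSet_Ioo)).symm
      _ ≤ ENNReal.ofReal (-M / H ρ₀) := ENNReal.ofReal_le_ofReal hk.2
  have hsub0 : Ioo r R ⊆ Ioo (0:ℝ) R := Ioo_subset_Ioo hr.1 le_rfl
  have hfmeas : AEStronglyMeasurable f (volume.restrict (Ioo r R)) :=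
    (hfcont.mono hsub0).aestronglyMeasurable measurableSet_Ioo
  have hnn := hfnonneg_ae _ hsub0 measurableSet_Ioo
  have hfint : IntegrableOn f (Ioo r R) := by
    refine ⟨hfmeas, ?_⟩
    rw [hasFiniteIntegral_iff_ofReal hnn]
    exact lt_of_le_of_lt hlin ENNReal.ofReal_lt_top
  refine ⟨hfint, ?_⟩
  rw [integral_eq_lintegral_of_nonneg_ae hnn hfmeas]
  exact ENNReal.toReal_le_of_le_ofReal hLpos.le hlin

/-- With `A(r) = ϱ(r) ξ(r)^(n-1)`, `V(r) = ∫₀^r A`,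
`H(r) = -(1/n) A(r)/V(r)`: let `ρ₀ > 0`, suppose `H` is differentiable with
`H' > 0` on `(0,ρ₀]`, and that `M` bounds `H(ς)²/(ϱ(ς)H'(ς))` on `(0,ρ₀]`
(i.e. the sup `M` is finite).  Then for every `R ∈ (0,ρ₀]` and `r ∈ [0,R]`,
the integral `v_R(r) = ∫_r^R (−n H(R) V)/(ϱ √(A² − n²H(R)²V²))` converges
and `v_R(r) ≤ −M/H(ρ₀)`. -/
theorem stmt_9
    (n : ℕ) (hn : 2 ≤ n)
    (ϱ ξ A V H : ℝ → ℝ)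
    (hϱ : ContDiffOn ℝ (⊤ : ℕ∞) ϱ (Ici 0)) (hξ : ContDiffOn ℝ (⊤ : ℕ∞) ξ (Ici 0))
    (hϱpos : ∀ r, 0 ≤ r → 0 < ϱ r)
    (hξ0 : ξ 0 = 0) (hξ'0 : deriv ξ 0 = 1)
    (hξpos : ∀ r, 0 < r → 0 < ξ r)
    (hA : ∀ r, A r = ϱ r * ξ r ^ (n - 1))
    (hV : ∀ r, V r = ∫ ς in Ioc (0:ℝ) r, A ς)
    (hH : ∀ r, 0 < r → H r = -(1 / (n:ℝ)) * (A r / V r))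
    (ρ₀ : ℝ) (hρ₀ : 0 < ρ₀)
    (H' : ℝ → ℝ)
    (hH' : ∀ ς ∈ Ioc (0:ℝ) ρ₀, HasDerivAt H (H' ς) ς)
    (hH'pos : ∀ ς ∈ Ioc (0:ℝ) ρ₀, 0 < H' ς)
    (M : ℝ)
    (hM : ∀ ς ∈ Ioc (0:ℝ) ρ₀, H ς ^ 2 / (ϱ ς * H' ς) ≤ M) :
    ∀ R ∈ Ioc (0:ℝ) ρ₀, ∀ r ∈ Icc (0:ℝ) R,
      IntegrableOn
        (fun ς => (-(n:ℝ) * H R * V ς) /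
          (ϱ ς * Real.sqrt (A ς ^ 2 - (n:ℝ) ^ 2 * H R ^ 2 * V ς ^ 2)))
        (Ioo r R) ∧
      (∫ ς in Ioo r R,
          (-(n:ℝ) * H R * V ς) /
            (ϱ ς * Real.sqrt (A ς ^ 2 - (n:ℝ) ^ 2 * H R ^ 2 * V ς ^ 2)))
        ≤ -M / H ρ₀ := by
  intro R hR r hr
  have hn0 : (0:ℝ) < (n:ℝ) := by
    have : (2:ℝ) ≤ (n:ℝ) := by exact_mod_cast hn
    linarith
  have Acont : ContinuousOn A (Ici 0) :=
    ((hϱ.continuousOn).mul ((hξ.continuousOn).pow (n - 1))).congr fun x _ => hA x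
  have Apos : ∀ ς : ℝ, 0 < ς → 0 < A ς := by
    intro ς hς
    rw [hA]
    exact mul_pos (hϱpos ς hς.le) (pow_pos (hξpos ς hς) _)
  have Vpos : ∀ ς : ℝ, 0 < ς → 0 < V ς := by
    intro ς hς
    rw [hV, ← intervalIntegral.integral_of_le hς.le]
    apply intervalIntegral.intervalIntegral_pos_of_pos_on
    · apply ContinuousOn.intervalIntegrable
      apply Acont.mono
      rw [uIcc_of_le hς.le]
      exact fun x hx => hx.1
    · exact fun x hx => Apos x hx.1
    · exact hς
  have hHneg : ∀ ς ∈ Ioc (0:ℝ) ρ₀, H ς < 0 := by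
    intro ς hς
    rw [hH ς hς.1]
    have h1 : 0 < (1 / (n:ℝ)) * (A ς / V ς) :=
      mul_pos (by positivity) (div_pos (Apos ς hς.1) (Vpos ς hς.1))
    linarith
  have hAHV : ∀ ς : ℝ, 0 < ς → A ς = -(n:ℝ) * H ς * V ς := by
    intro ς hς
    have hV0 : V ς ≠ 0 := (Vpos ς hς).ne'
    have hn' : (n:ℝ) ≠ 0 := hn0.ne'
    rw [hH ς hς]
    field_simp
  obtain ⟨h1, h2⟩ := aux_stmt9 ϱ H H' ρ₀ hρ₀ hϱ.continuousOn hϱpos hH' hH'pos hHneg M hM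
    R hR r hr
  have heq : EqOn (fun ς => -H R / (ϱ ς * Real.sqrt (H ς ^ 2 - H R ^ 2)))
      (fun ς => (-(n:ℝ) * H R * V ς) /
        (ϱ ς * Real.sqrt (A ς ^ 2 - (n:ℝ) ^ 2 * H R ^ 2 * V ς ^ 2))) (Ioo r R) := by
    intro ς hς
    have hς0 : 0 < ς := lt_of_le_of_lt hr.1 hς.1
    have hVp := Vpos ς hς0
    have hkey : A ς ^ 2 - (n:ℝ) ^ 2 * H R ^ 2 * V ς ^ 2
        = ((n:ℝ) * V ς) ^ 2 * (H ς ^ 2 - H R ^ 2) := by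
      rw [hAHV ς hς0]; ring
    have hnV : ((n:ℝ) * V ς) ≠ 0 := by positivity
    simp only
    rw [hkey, Real.sqrt_mul (sq_nonneg _), Real.sqrt_sq (by positivity : (0:ℝ) ≤ (n:ℝ) * V ς),
      show (-(n:ℝ) * H R * V ς) = ((n:ℝ) * V ς) * (-H R) by ring,
      show ϱ ς * ((n:ℝ) * V ς * Real.sqrt (H ς ^ 2 - H R ^ 2))
        = ((n:ℝ) * V ς) * (ϱ ς * Real.sqrt (H ς ^ 2 - H R ^ 2)) by ring,
      mul_div_mul_left _ _ hnV]
  refine ⟨h1.congr_fun heq measurableSet_Ioo, ?_⟩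
  rw [← setIntegral_congr_fun measurableSet_Ioo heq]
  exact h2
end
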